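/- arXiv:2204.11235 — 3 statements merged into one kernel-verified Lean document; each statement's English description precedes it below -/
import Mathlib

section
/- If a partial function f : A^ω ⇀ B^ω is deterministic regular, then its domain dom f is a Büchi deterministic language. -/
/-- `u` is a prefix of the infinite word `y`. -/
def PrefixOf {B : Type} (u : List B) (y : ℕ → B) : Prop :=
  ∀ (i : ℕ) (h : i < u.length), u.get ⟨i, h⟩ = y i

/-- Concatenation of a finite word and an infinite word. -/
def listPrepend {B : Type} (u : List B) (y : ℕ → B) : ℕ → B :=
  fun i => if h : i < u.length then u.get ⟨i, h⟩ else y (i - u.length)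

/-- The finite word `v` repeated `n` times. -/
def powList {B : Type} (v : List B) (n : ℕ) : List B :=
  (List.replicate n v).flatten

/-- The infinite word `y` equals `u · v^ω` (meaningful when `v ≠ []`). -/
def EqUVomega {B : Type} (u v : List B) (y : ℕ → B) : Prop :=
  ∀ n : ℕ, PrefixOf (u ++ powList v n) y

/-- A deterministic two-way transducer (2-dT). `step q (none)` is the behavior on the
left endmarker `⊢`; the `Bool` is `true` for a right move `▷` and `false` for `◁`;
the list is the output of the transition. -/
structure TDT (A B : Type) where
  Q : Type
  fin : Fintype Q
  q0 : Q
  step : Q → Option A → Option (Q × Bool × List B)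

attribute [instance] TDT.fin

/-- The tape `⊢x`: position `0` carries the endmarker, position `i+1` carries `x i`. -/
def tape {A : Type} (x : ℕ → A) : ℕ → Option A :=
  fun i => if i = 0 then none else some (x (i - 1))

namespace TDT

variable {A B : Type}

/-- An infinite run of the 2-dT on `x`, as a sequence of configurations. -/
def IsRun (T : TDT A B) (x : ℕ → A) (c : ℕ → T.Q × ℕ) : Prop :=
  c 0 = (T.q0, 0) ∧
  ∀ n : ℕ, ∃ q' dir w, T.step (c n).1 (tape x (c n).2) = some (q', dir, w) ∧
    (c (n + 1)).1 = q' ∧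
    ((dir = true ∧ (c (n + 1)).2 = (c n).2 + 1) ∨
     (dir = false ∧ (c n).2 = (c (n + 1)).2 + 1))

/-- Accepting run: the positions tend to infinity. -/
def AcceptingRun (T : TDT A B) (x : ℕ → A) (c : ℕ → T.Q × ℕ) : Prop :=
  T.IsRun x c ∧ ∀ m : ℕ, ∃ N : ℕ, ∀ n : ℕ, N ≤ n → m ≤ (c n).2

/-- Output produced by the `n`-th transition of the run. -/
def outAt (T : TDT A B) (x : ℕ → A) (c : ℕ → T.Q × ℕ) (n : ℕ) : List B :=
  match T.step (c n).1 (tape x (c n).2) with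
  | some (_, _, w) => w
  | none => []

/-- Output along the first `n` transitions of the run. -/
def outPrefix (T : TDT A B) (x : ℕ → A) (c : ℕ → T.Q × ℕ) (n : ℕ) : List B :=
  ((List.range n).map (T.outAt x c)).flatten

/-- The partial function computed by a 2-dT. -/
def Computes (T : TDT A B) (f : (ℕ → A) → Option (ℕ → B)) : Prop :=
  ∀ x y, f x = some y ↔ ∃ c, T.AcceptingRun x c ∧
    (∀ m : ℕ, ∃ n : ℕ, m ≤ (T.outPrefix x c n).length) ∧
    (∀ n : ℕ, PrefixOf (T.outPrefix x c n) y)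

end TDT

/-- A partial function is deterministic regular if some 2-dT computes it. -/
def DetRegular {A B : Type} (f : (ℕ → A) → Option (ℕ → B)) : Prop :=
  ∃ T : TDT A B, T.Computes f

/-- A deterministic Büchi automaton (with partial transition function). -/
structure DBA (A : Type) where
  Q : Type
  fin : Fintype Q
  q0 : Q
  δ : Q → A → Option Q
  F : Set Q

attribute [instance] DBA.fin

namespace DBA

variable {A : Type}

/-- The (partial) run of the automaton on `x`. -/
def runAt (D : DBA A) (x : ℕ → A) : ℕ → Option D.Q
  | 0 => some D.q0
  | n + 1 => (DBA.runAt D x n).bind fun q => D.δ q (x n)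

/-- The run on `x` is everywhere defined and visits `F` infinitely often. -/
def Accepts (D : DBA A) (x : ℕ → A) : Prop :=
  ∀ i : ℕ, ∃ j : ℕ, i ≤ j ∧ ∃ q, D.runAt x j = some q ∧ q ∈ D.F

end DBA

/-- A language of infinite words is Büchi deterministic. -/
def BuchiDet {A : Type} (L : Set (ℕ → A)) : Prop :=
  ∃ D : DBA A, ∀ x, x ∈ L ↔ D.Accepts x

/-!
A deterministic Büchi automaton can follow the two-way machine in a single left-to-right pass
(Shepherdson's construction). After reading `x₀ ⋯ xₙ₋₁` it holds the crossing table of position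
`n`: for each state `q`, the state in which the machine, started in `q` at position `n`, first
reaches position `n + 1`, and whether it produced output meanwhile. This table is determined by
the table of position `n - 1` and the letter at position `n`, because a left move from `n` comes
back, if at all, as the table of `n - 1` prescribes. Chaining the tables gives the state at the
first visit of every position: the automaton dies exactly when some position is never reached,
and it passes through `F` whenever output was produced between two consecutive first visits.
Finally, a run reaching every position tends to infinity, since a deterministic run that returns
infinitely often below some bound repeats a configuration and is then periodic.
-/

theorem exists_first_arrival {f : ℕ → ℕ} {a b v : ℕ} (hab : a ≤ b)
    (hf : ∀ k, a ≤ k → k < b → f (k + 1) ≤ f k + 1) (ha : f a ≤ v) (hb : v ≤ f b) :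
    ∃ s, a ≤ s ∧ s ≤ b ∧ f s = v ∧ ∀ k, a ≤ k → k < s → f k < v := by
  classical
  have hex : ∃ s, a ≤ s ∧ v ≤ f s := ⟨b, hab, hb⟩
  obtain ⟨has, hvs⟩ := Nat.find_spec hex
  have hsb : Nat.find hex ≤ b := Nat.find_min' hex ⟨hab, hb⟩
  have hbelow : ∀ k, a ≤ k → k < Nat.find hex → f k < v := fun k hak hk =>
    not_le.1 fun hvk => Nat.find_min hex hk ⟨hak, hvk⟩
  refine ⟨Nat.find hex, has, hsb, le_antisymm ?_ hvs, hbelow⟩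
  rcases has.eq_or_lt with heq | hlt
  · rw [← heq]; exact ha
  · obtain ⟨s, hs⟩ : ∃ s, Nat.find hex = s + 1 := Nat.exists_eq_succ_of_ne_zero (by omega)
    have := hf s (by omega) (by omega)
    have := hbelow s (by omega) (by omega)
    rw [hs]
    omega

theorem exists_strictMono_first_arrivals {f : ℕ → ℕ} (h0 : f 0 = 0)
    (hf : ∀ k, f (k + 1) ≤ f k + 1) (hunb : ∀ n, ∃ k, n ≤ f k) :
    ∃ t : ℕ → ℕ, StrictMono t ∧ ∀ n, f (t n) = n ∧ ∀ k < t n, f k < n := by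
  classical
  have hfirst : ∀ n, f (Nat.find (hunb n)) = n ∧ ∀ k < Nat.find (hunb n), f k < n := fun n => by
    have hbelow : ∀ k < Nat.find (hunb n), f k < n := fun k hk =>
      not_le.1 (Nat.find_min (hunb n) hk)
    obtain ⟨s, -, hs, hfs, -⟩ := exists_first_arrival (Nat.zero_le _) (fun k _ _ => hf k)
      (by rw [h0]; exact Nat.zero_le n) (Nat.find_spec (hunb n))
    obtain rfl : s = Nat.find (hunb n) := hs.eq_or_lt.resolve_right fun h => (hbelow s h).ne hfs
    exact ⟨hfs, hbelow⟩
  refine ⟨fun n => Nat.find (hunb n), strictMono_nat_of_lt_succ fun n => ?_, hfirst⟩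
  refine lt_of_le_of_ne (Nat.find_min' _ ?_) fun h => ?_
  · rw [(hfirst (n + 1)).1]; exact n.le_succ
  · have := (hfirst n).1
    rw [h, (hfirst (n + 1)).1] at this
    omega

theorem exists_mem_Ico_of_strictMono {t : ℕ → ℕ} (ht : StrictMono t) {i k : ℕ} (hk : t i ≤ k) :
    ∃ n, i ≤ n ∧ t n ≤ k ∧ k < t (n + 1) := by
  classical
  have hex : ∃ n, k < t (n + 1) := ⟨k, (Nat.lt_succ_self k).trans_le (ht.id_le _)⟩
  refine ⟨Nat.find hex, ?_, ?_, Nat.find_spec hex⟩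
  · exact Nat.lt_succ_iff.1 (ht.lt_iff_lt.1 (hk.trans_lt (Nat.find_spec hex)))
  · rcases Nat.eq_zero_or_pos (Nat.find hex) with h | h
    · rw [h]; exact (ht.monotone (Nat.zero_le i)).trans hk
    · have := Nat.find_min hex (Nat.sub_lt h one_pos)
      rwa [Nat.sub_add_cancel (Nat.one_le_iff_ne_zero.2 h.ne'), not_lt] at this

theorem unbounded_iff_frequently_ne_zero {L g : ℕ → ℕ} (hL : ∀ n, L (n + 1) = L n + g n) :
    (∀ m, ∃ n, m ≤ L n) ↔ ∀ K, ∃ k, K ≤ k ∧ g k ≠ 0 := by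
  have hmono : Monotone L := monotone_nat_of_le_succ fun n => by simp [hL]
  constructor
  · intro hunb K
    by_contra! hzero
    have hbound : ∀ n, L n ≤ L K := fun n => by
      induction n with
      | zero => exact hmono (Nat.zero_le K)
      | succ n ih =>
        rcases le_or_gt K n with h | h
        · simpa [hL, hzero n h] using ih
        · exact hmono h
    obtain ⟨n, hn⟩ := hunb (L K + 1)
    exact absurd (hbound n) (by omega)
  · intro hinf m
    induction m with
    | zero => exact ⟨0, Nat.zero_le _⟩
    | succ m ih =>
      obtain ⟨n, hn⟩ := ih
      obtain ⟨k, hnk, hk⟩ := hinf n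
      refine ⟨k + 1, ?_⟩
      have := hmono hnk
      rw [hL]
      omega

theorem exists_prefixOf_of_isPrefix_succ {B : Type} {u : ℕ → List B}
    (hu : ∀ n, u n <+: u (n + 1)) (hlen : ∀ m, ∃ n, m ≤ (u n).length) :
    ∃ y : ℕ → B, ∀ n, PrefixOf (u n) y := by
  have hmono : ∀ {n n'}, n ≤ n' → u n <+: u n' := fun h =>
    Nat.le_induction (List.prefix_refl _) (fun _ _ ih => ih.trans (hu _)) _ h
  choose N hN using fun j => hlen (j + 1)
  refine ⟨fun j => (u (N j))[j]'(hN j), fun n i hi => ?_⟩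
  simp only [List.get_eq_getElem]
  exact ((hmono (le_max_left n (N i))).getElem hi).trans
    ((hmono (le_max_right n (N i))).getElem (hN i)).symm

theorem finite_range_iterate_of_infinite_mem {α : Type*} {g : α → α} {p : α} {s : Set α}
    (hs : s.Finite) (hinf : {n | g^[n] p ∈ s}.Infinite) :
    (Set.range fun n => g^[n] p).Finite := by
  obtain ⟨k, -, k', -, hne, heq⟩ :=
    hinf.exists_ne_map_eq_of_mapsTo (f := fun n => g^[n] p) (fun _ hn => hn) hs
  wlog hkk : k < k' generalizing k k'
  · exact this k' k hne.symm heq.symm (by omega)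
  have hper : Function.IsPeriodicPt g (k' - k) (g^[k] p) := by
    rw [Function.IsPeriodicPt, Function.IsFixedPt, ← Function.iterate_add_apply,
      Nat.sub_add_cancel hkk.le, heq]
  refine ((Set.finite_Iio k').image fun n => g^[n] p).subset ?_
  rintro _ ⟨n, rfl⟩
  rcases lt_or_ge n k' with hn | hn
  · exact ⟨n, hn, rfl⟩
  · refine ⟨(n - k) % (k' - k) + k, ?_, ?_⟩
    · have := Nat.mod_lt (n - k) (show 0 < k' - k by omega)
      simp only [Set.mem_Iio]
      omega
    · simp only
      rw [Function.iterate_add_apply, hper.iterate_mod_apply, ← Function.iterate_add_apply,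
        Nat.sub_add_cancel (by omega)]

namespace TDT

open Classical

variable {A B : Type} (T : TDT A B) (x : ℕ → A)

def Step (p p' : T.Q × ℕ) : Prop :=
  ∃ q' dir w, T.step p.1 (tape x p.2) = some (q', dir, w) ∧ p'.1 = q' ∧
    ((dir = true ∧ p'.2 = p.2 + 1) ∨ (dir = false ∧ p.2 = p'.2 + 1))

theorem isRun_iff {c : ℕ → T.Q × ℕ} :
    T.IsRun x c ↔ c 0 = (T.q0, 0) ∧ ∀ n, T.Step x (c n) (c (n + 1)) :=
  Iff.rfl

variable {T x}

theorem Step.right {q q' : T.Q} {i : ℕ} {w : List B}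
    (h : T.step q (tape x i) = some (q', true, w)) : T.Step x (q, i) (q', i + 1) :=
  ⟨q', true, w, h, rfl, .inl ⟨rfl, rfl⟩⟩

theorem Step.left {q q' : T.Q} {j : ℕ} {w : List B}
    (h : T.step q (tape x (j + 1)) = some (q', false, w)) : T.Step x (q, j + 1) (q', j) :=
  ⟨q', false, w, h, rfl, .inr ⟨rfl, rfl⟩⟩

theorem Step.eq {p p₁ p₂ : T.Q × ℕ} (h₁ : T.Step x p p₁) (h₂ : T.Step x p p₂) : p₁ = p₂ := by
  obtain ⟨q₁, d₁, w₁, hs₁, hq₁, hd₁⟩ := h₁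
  obtain ⟨q₂, d₂, w₂, hs₂, hq₂, hd₂⟩ := h₂
  rw [hs₁, Option.some.injEq, Prod.mk.injEq, Prod.mk.injEq] at hs₂
  obtain ⟨rfl, rfl, -⟩ := hs₂
  refine Prod.ext (hq₁.trans hq₂.symm) ?_
  rcases hd₁ with ⟨rfl, _⟩ | ⟨rfl, _⟩ <;> rcases hd₂ with ⟨⟨⟩, _⟩ | ⟨⟨⟩, _⟩ <;> omega

theorem Step.snd_le {p p' : T.Q × ℕ} (h : T.Step x p p') : p'.2 ≤ p.2 + 1 := by
  obtain ⟨_, _, _, _, _, ⟨_, h⟩ | ⟨_, h⟩⟩ := h <;> omega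

theorem outAt_eq {c : ℕ → T.Q × ℕ} {k i : ℕ} {q q' : T.Q} {d : Bool} {w : List B}
    (hc : c k = (q, i)) (h : T.step q (tape x i) = some (q', d, w)) : T.outAt x c k = w := by
  simp [outAt, hc, h]

variable (T x)

/-- The successor configuration, or the configuration itself when the machine is stuck. -/
noncomputable def next (p : T.Q × ℕ) : T.Q × ℕ :=
  if h : ∃ p', T.Step x p p' then h.choose else p

noncomputable def trace (n : ℕ) : T.Q × ℕ :=
  (T.next x)^[n] (T.q0, 0)

def StepsOn (c : ℕ → T.Q × ℕ) (a b : ℕ) : Prop :=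
  ∀ k, a ≤ k → k < b → T.Step x (c k) (c (k + 1))

def OutputIn (c : ℕ → T.Q × ℕ) (a b : ℕ) : Prop :=
  ∃ k, a ≤ k ∧ k < b ∧ T.outAt x c k ≠ []

variable {T x}

theorem trace_succ_of_step {k : ℕ} {p : T.Q × ℕ} (h : T.Step x (T.trace x k) p) :
    T.trace x (k + 1) = p := by
  have hex : ∃ p', T.Step x (T.trace x k) p' := ⟨p, h⟩
  rw [trace, Function.iterate_succ_apply', ← trace, next, dif_pos hex]
  exact hex.choose_spec.eq h

theorem StepsOn.trans {c : ℕ → T.Q × ℕ} {a s b : ℕ} (h₁ : T.StepsOn x c a s)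
    (h₂ : T.StepsOn x c s b) : T.StepsOn x c a b := fun k hak hkb =>
  (lt_or_ge k s).elim (h₁ k hak) (fun hsk => h₂ k hsk hkb)

theorem stepsOn_succ {c : ℕ → T.Q × ℕ} {a : ℕ} :
    T.StepsOn x c a (a + 1) ↔ T.Step x (c a) (c (a + 1)) :=
  ⟨fun h => h a le_rfl a.lt_succ_self, fun h k hak hka => by
    obtain rfl : k = a := by omega
    exact h⟩

theorem OutputIn.mono {c : ℕ → T.Q × ℕ} {a b a' b' : ℕ} (h : T.OutputIn x c a b)
    (ha : a' ≤ a) (hb : b ≤ b') : T.OutputIn x c a' b' := by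
  obtain ⟨k, hak, hkb, hk⟩ := h
  exact ⟨k, ha.trans hak, hkb.trans_le hb, hk⟩

theorem outputIn_iff_of_le {c : ℕ → T.Q × ℕ} {a s b : ℕ} (has : a ≤ s) (hsb : s ≤ b) :
    T.OutputIn x c a b ↔ T.OutputIn x c a s ∨ T.OutputIn x c s b := by
  refine ⟨fun ⟨k, hak, hkb, hk⟩ => ?_, fun h => h.elim (·.mono le_rfl hsb) (·.mono has le_rfl)⟩
  exact (lt_or_ge k s).elim (fun hks => .inl ⟨k, hak, hks, hk⟩) (fun hsk => .inr ⟨k, hsk, hkb, hk⟩)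

theorem outputIn_succ {c : ℕ → T.Q × ℕ} {a : ℕ} :
    T.OutputIn x c a (a + 1) ↔ T.outAt x c a ≠ [] :=
  ⟨fun ⟨k, hak, hka, hk⟩ => by
    obtain rfl : k = a := by omega
    exact hk,
    fun h => ⟨a, le_rfl, a.lt_succ_self, h⟩⟩

variable (T x)

/-- `T.Cross τ a q (q', b)`: started in state `q` on a cell carrying `a` whose left neighbour
has crossing table `τ`, the machine first steps onto the right neighbour in state `q'`, and `b`
records whether it produced output on the way. -/
inductive Cross (τ : T.Q → Option (T.Q × Bool)) (a : Option A) : T.Q → T.Q × Bool → Prop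
  | right {q q' : T.Q} {w : List B} :
      T.step q a = some (q', true, w) → Cross τ a q (q', !w.isEmpty)
  | left {q q₂ q₃ : T.Q} {b : Bool} {w : List B} {r : T.Q × Bool} :
      T.step q a = some (q₂, false, w) → τ q₂ = some (q₃, b) → Cross τ a q₃ r →
      Cross τ a q (r.1, !w.isEmpty || b || r.2)

noncomputable def crossFn (τ : T.Q → Option (T.Q × Bool)) (a : Option A) (q : T.Q) :
    Option (T.Q × Bool) :=
  if h : ∃ r, T.Cross τ a q r then some h.choose else none

/-- `T.crossTable x (i + 1) q = some (q', b)` when the machine, started in state `q` at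
position `i`, first reaches position `i + 1` in state `q'`, with output on the way iff `b`.
It depends only on the cells `0, …, i`, so a one-way automaton can maintain it. -/
noncomputable def crossTable : ℕ → T.Q → Option (T.Q × Bool)
  | 0 => fun _ => none
  | n + 1 => T.crossFn (crossTable n) (tape x n)

variable {T x}

theorem Cross.unique {τ : T.Q → Option (T.Q × Bool)} {a : Option A} {q : T.Q}
    {r₁ r₂ : T.Q × Bool} (h₁ : T.Cross τ a q r₁) (h₂ : T.Cross τ a q r₂) : r₁ = r₂ := by
  induction h₁ generalizing r₂ with
  | right hs =>
    cases h₂ with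
    | right hs' => rw [hs] at hs'; cases hs'; rfl
    | left hs' => rw [hs] at hs'; cases hs'
  | left hs hτ _ ih =>
    cases h₂ with
    | right hs' => rw [hs] at hs'; cases hs'
    | left hs' hτ' hr' =>
      rw [hs] at hs'; cases hs'
      rw [hτ] at hτ'; cases hτ'
      rw [ih hr']

theorem crossFn_eq_some {τ : T.Q → Option (T.Q × Bool)} {a : Option A} {q : T.Q}
    {r : T.Q × Bool} : T.crossFn τ a q = some r ↔ T.Cross τ a q r := by
  unfold crossFn
  split_ifs with hex
  · exact ⟨fun h => Option.some.inj h ▸ hex.choose_spec,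
      fun h => congrArg some (hex.choose_spec.unique h)⟩
  · exact ⟨False.elim, fun h => (hex ⟨r, h⟩).elim⟩

theorem crossTable_succ_eq_some {i : ℕ} {q : T.Q} {r : T.Q × Bool} :
    T.crossTable x (i + 1) q = some r ↔ T.Cross (T.crossTable x i) (tape x i) q r :=
  crossFn_eq_some

theorem exists_trace_of_cross {i : ℕ} {q : T.Q} {r : T.Q × Bool}
    (h : T.Cross (T.crossTable x i) (tape x i) q r) {a : ℕ} (ha : T.trace x a = (q, i)) :
    ∃ b, a < b ∧ T.trace x b = (r.1, i + 1) ∧ T.StepsOn x (T.trace x) a b ∧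
      (r.2 = true → T.OutputIn x (T.trace x) a b) := by
  induction i using Nat.strong_induction_on generalizing q r a with
  | _ i ih =>
  induction h generalizing a with
  | @right q q' w hs =>
    have hstep : T.Step x (T.trace x a) (q', i + 1) := ha ▸ Step.right hs
    have hnext := trace_succ_of_step hstep
    refine ⟨a + 1, a.lt_succ_self, hnext, stepsOn_succ.2 (hnext ▸ hstep), fun hw => ?_⟩
    rw [outputIn_succ, outAt_eq ha hs]
    simpa using hw
  | @left q q₂ q₃ b w r hs hτ _ ihr =>
    obtain ⟨j, rfl⟩ : ∃ j, i = j + 1 :=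
      Nat.exists_eq_succ_of_ne_zero (by rintro rfl; cases hτ)
    have hstep : T.Step x (T.trace x a) (q₂, j) := ha ▸ Step.left hs
    have hnext := trace_succ_of_step hstep
    obtain ⟨b₂, hab₂, hb₂, hsteps₂, hout₂⟩ :=
      ih j j.lt_succ_self (crossTable_succ_eq_some.1 hτ) hnext
    obtain ⟨b₃, hb₂₃, hb₃, hsteps₃, hout₃⟩ := ihr hb₂
    refine ⟨b₃, by omega, hb₃, ((stepsOn_succ.2 (hnext ▸ hstep)).trans hsteps₂).trans hsteps₃,
      fun hflag => ?_⟩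
    simp only [Bool.or_eq_true, Bool.not_eq_eq_eq_not, Bool.not_true,
      List.isEmpty_eq_false_iff] at hflag
    rcases hflag with (hw | hb) | hr
    · refine (outputIn_succ.2 ?_).mono le_rfl (by omega)
      rwa [outAt_eq ha hs]
    · exact (hout₂ hb).mono (by omega) (by omega)
    · exact (hout₃ hr).mono (by omega) le_rfl

theorem cross_of_stepsOn {c : ℕ → T.Q × ℕ} {i a b : ℕ} (hab : a ≤ b) (hc : T.StepsOn x c a b)
    (ha : (c a).2 = i) (hb : (c b).2 = i + 1) (hle : ∀ k, a ≤ k → k < b → (c k).2 ≤ i) :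
    T.Cross (T.crossTable x i) (tape x i) (c a).1 ((c b).1, decide (T.OutputIn x c a b)) := by
  have hab' : a < b := lt_of_le_of_ne hab (by rintro rfl; omega)
  obtain ⟨q', d, w, hs, hq', hd⟩ := hc a le_rfl hab'
  rw [ha] at hs
  have hout : T.outAt x c a = w := outAt_eq (Prod.ext rfl ha : c a = ((c a).1, i)) hs
  rcases hd with ⟨rfl, hpos⟩ | ⟨rfl, hpos⟩
  · obtain rfl : b = a + 1 := by
      by_contra hne
      have := hle (a + 1) (by omega) (by omega)
      omega
    rw [hq']
    convert Cross.right hs using 2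
    simp only [outputIn_succ, hout]
    cases w <;> simp
  · obtain ⟨j, rfl⟩ : ∃ j, i = j + 1 := ⟨(c (a + 1)).2, by omega⟩
    -- the excursion to the left ends at the first return to position `j + 1`
    obtain ⟨s, has, hsb, hcs, hbelow⟩ := exists_first_arrival (f := fun k => (c k).2)
      (v := j + 1) (a := a + 1) (b := b) (by omega)
      (fun k hak hkb => (hc k (by omega) hkb).snd_le) (by omega) (by omega)
    have hleft := cross_of_stepsOn (i := j) (a := a + 1) (b := s) (by omega)
      (fun k hak hks => hc k (by omega) (by omega)) (by omega) hcs
      (fun k hak hks => Nat.lt_succ_iff.1 (hbelow k hak hks))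
    have hright := cross_of_stepsOn (i := j + 1) (a := s) (b := b) (by omega)
      (fun k hsk hkb => hc k (by omega) hkb) hcs hb
      (fun k hsk hkb => hle k (by omega) hkb)
    convert Cross.left hs (hq' ▸ crossTable_succ_eq_some.2 hleft) hright using 2
    simp only [outputIn_iff_of_le (Nat.le_succ a) (show a + 1 ≤ b by omega),
      outputIn_iff_of_le (show a + 1 ≤ s by omega) hsb, outputIn_succ, hout]
    cases w <;> simp
termination_by b - a

variable (T x)

/-- The state in which the machine first visits position `n`, and whether it has produced
output since its first visit of position `n - 1`. -/
noncomputable def firstVisit : ℕ → Option (T.Q × Bool)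
  | 0 => some (T.q0, false)
  | n + 1 => (firstVisit n).bind fun s => T.crossTable x (n + 1) s.1

noncomputable def toDBA : DBA A where
  Q := (T.Q → Option (T.Q × Bool)) × T.Q × Bool
  fin := inferInstance
  q0 := (T.crossFn (fun _ => none) none, T.q0, false)
  δ s a := (s.1 s.2.1).map fun r => (T.crossFn s.1 (some a), r)
  F := {s | s.2.2 = true}

def Dom : Set (ℕ → A) :=
  {x | ∃ c, T.AcceptingRun x c ∧ ∀ m, ∃ n, m ≤ (T.outPrefix x c n).length}

variable {T x}

theorem toDBA_runAt (n : ℕ) :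
    T.toDBA.runAt x n = (T.firstVisit x n).map fun s => (T.crossTable x (n + 1), s) := by
  induction n with
  | zero => simp [DBA.runAt, firstVisit, crossTable, tape, toDBA]
  | succ n ih =>
    rw [DBA.runAt, ih, firstVisit]
    cases T.firstVisit x n with
    | none => rfl
    | some s => cases T.crossTable x (n + 1) s.1 <;> simp [toDBA, crossTable, tape]

theorem toDBA_accepts_iff_firstVisit :
    T.toDBA.Accepts x ↔ ∀ i, ∃ j, i ≤ j ∧ ∃ q, T.firstVisit x j = some (q, true) := by
  refine forall_congr' fun i => exists_congr fun j => and_congr_right fun _ => ?_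
  rw [toDBA_runAt]
  constructor
  · rintro ⟨_, hs, hF⟩
    obtain ⟨⟨q, b⟩, h, rfl⟩ := Option.map_eq_some_iff.1 hs
    obtain rfl : b = true := hF
    exact ⟨q, h⟩
  · rintro ⟨q, h⟩
    exact ⟨_, by rw [h]; rfl, rfl⟩

theorem unbounded_outPrefix_iff {c : ℕ → T.Q × ℕ} :
    (∀ m, ∃ n, m ≤ (T.outPrefix x c n).length) ↔ ∀ K, ∃ k, K ≤ k ∧ T.outAt x c k ≠ [] := by
  rw [unbounded_iff_frequently_ne_zero (g := fun k => (T.outAt x c k).length)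
    fun n => by simp [outPrefix, List.range_succ]]
  simp

theorem outPrefix_prefix_succ (c : ℕ → T.Q × ℕ) (n : ℕ) :
    T.outPrefix x c n <+: T.outPrefix x c (n + 1) := by
  simp [outPrefix, List.range_succ]

theorem firstVisit_succ_of_isRun {c : ℕ → T.Q × ℕ} (hrun : T.IsRun x c) {t : ℕ → ℕ}
    (ht : StrictMono t) (hpos : ∀ n, (c (t n)).2 = n ∧ ∀ k < t n, (c k).2 < n) (n : ℕ) :
    T.firstVisit x (n + 1) =
      some ((c (t (n + 1))).1, decide (T.OutputIn x c (t n) (t (n + 1)))) := by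
  have hcross : ∀ n, T.crossTable x (n + 1) (c (t n)).1 =
      some ((c (t (n + 1))).1, decide (T.OutputIn x c (t n) (t (n + 1)))) := fun n =>
    crossTable_succ_eq_some.2 <| cross_of_stepsOn (i := n) (ht n.lt_succ_self).le
      (fun k _ _ => ((isRun_iff T x).1 hrun).2 k) (hpos n).1 (hpos (n + 1)).1
      fun k _ hk => Nat.lt_succ_iff.1 ((hpos (n + 1)).2 k hk)
  have ht0 : t 0 = 0 := Nat.eq_zero_of_not_pos fun h => Nat.not_lt_zero _ ((hpos 0).2 0 h)
  have hvisit : ∀ n, ∃ b, T.firstVisit x n = some ((c (t n)).1, b) := fun n => by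
    induction n with
    | zero => exact ⟨false, by rw [ht0, hrun.1]; rfl⟩
    | succ n ih =>
      obtain ⟨b, hb⟩ := ih
      exact ⟨_, by rw [firstVisit, hb, Option.bind_some, hcross]⟩
  obtain ⟨b, hb⟩ := hvisit n
  rw [firstVisit, hb, Option.bind_some, hcross]

theorem toDBA_accepts_of_acceptingRun {c : ℕ → T.Q × ℕ} (hacc : T.AcceptingRun x c)
    (hout : ∀ m, ∃ n, m ≤ (T.outPrefix x c n).length) : T.toDBA.Accepts x := by
  obtain ⟨hrun, htend⟩ := hacc
  obtain ⟨t, ht, hpos⟩ := exists_strictMono_first_arrivals (f := fun k => (c k).2)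
    (by rw [hrun.1]) (fun k => Step.snd_le (((isRun_iff T x).1 hrun).2 k))
    (fun n => (htend n).imp fun N hN => hN N le_rfl)
  rw [toDBA_accepts_iff_firstVisit]
  intro i
  obtain ⟨k, hk, hne⟩ := unbounded_outPrefix_iff.1 hout (t i)
  obtain ⟨n, hin, hnk, hkn⟩ := exists_mem_Ico_of_strictMono ht hk
  exact ⟨n + 1, by omega, _, by
    rw [firstVisit_succ_of_isRun hrun ht hpos n, decide_eq_true ⟨k, hnk, hkn, hne⟩]⟩

theorem exists_trace_of_firstVisit {n : ℕ} {s : T.Q × Bool} (h : T.firstVisit x n = some s) :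
    ∃ a, n ≤ a ∧ T.trace x a = (s.1, n) ∧ T.StepsOn x (T.trace x) 0 a := by
  induction n generalizing s with
  | zero =>
    obtain rfl : s = (T.q0, false) := (Option.some.inj h).symm
    exact ⟨0, le_rfl, rfl, fun k _ hk => absurd hk (Nat.not_lt_zero k)⟩
  | succ n ih =>
    obtain ⟨s₀, hs₀, hcross⟩ := Option.bind_eq_some_iff.1 h
    obtain ⟨a, hna, ha, hsteps⟩ := ih hs₀
    obtain ⟨b, hab, hb, hsteps', -⟩ :=
      exists_trace_of_cross (crossTable_succ_eq_some.1 hcross) ha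
    exact ⟨b, by omega, hb, hsteps.trans hsteps'⟩

theorem trace_snd_eventually_ge (hunb : ∀ m, ∃ k, m ≤ (T.trace x k).2) (m : ℕ) :
    ∃ N, ∀ n, N ≤ n → m ≤ (T.trace x n).2 := by
  by_contra! h
  have hinf : {n | T.trace x n ∈ (Set.univ ×ˢ Set.Iio m : Set (T.Q × ℕ))}.Infinite := by
    rw [← Nat.frequently_atTop_iff_infinite, Filter.frequently_atTop]
    simpa using h
  obtain ⟨M, hM⟩ := ((finite_range_iterate_of_infinite_mem
    (Set.finite_univ.prod (Set.finite_Iio m)) hinf).image Prod.snd).bddAbove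
  obtain ⟨k, hk⟩ := hunb (M + 1)
  have := hM ⟨T.trace x k, ⟨k, rfl⟩, rfl⟩
  omega

theorem mem_dom_of_toDBA_accepts (h : T.toDBA.Accepts x) : x ∈ T.Dom := by
  rw [toDBA_accepts_iff_firstVisit] at h
  refine ⟨T.trace x, ⟨(isRun_iff T x).2 ⟨rfl, fun k => ?_⟩, trace_snd_eventually_ge fun m => ?_⟩,
    unbounded_outPrefix_iff.2 fun K => ?_⟩
  · obtain ⟨j, hj, _, hq⟩ := h (k + 1)
    obtain ⟨a, hja, -, hsteps⟩ := exists_trace_of_firstVisit hq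
    exact hsteps k (Nat.zero_le k) (by omega)
  · obtain ⟨j, hj, _, hq⟩ := h m
    obtain ⟨a, -, ha, -⟩ := exists_trace_of_firstVisit hq
    exact ⟨a, by rw [ha]; exact hj⟩
  · obtain ⟨j, hj, q, hq⟩ := h (K + 1)
    obtain ⟨n, rfl⟩ : ∃ n, j = n + 1 := ⟨j - 1, by omega⟩
    obtain ⟨s, hs, hcross⟩ := Option.bind_eq_some_iff.1 hq
    obtain ⟨a, hna, ha, -⟩ := exists_trace_of_firstVisit hs
    obtain ⟨b, -, -, -, hout⟩ := exists_trace_of_cross (crossTable_succ_eq_some.1 hcross) ha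
    obtain ⟨k, hak, -, hk⟩ := hout rfl
    exact ⟨k, by omega, hk⟩

theorem toDBA_accepts_iff : T.toDBA.Accepts x ↔ x ∈ T.Dom :=
  ⟨mem_dom_of_toDBA_accepts, fun ⟨_, hacc, hout⟩ => toDBA_accepts_of_acceptingRun hacc hout⟩

theorem Computes.dom_eq {f : (ℕ → A) → Option (ℕ → B)} (hT : T.Computes f) :
    {x | ∃ y, f x = some y} = T.Dom := by
  ext x
  refine ⟨fun ⟨y, hy⟩ => ?_, fun ⟨c, hacc, hout⟩ => ?_⟩
  · obtain ⟨c, hacc, hout, -⟩ := (hT x y).1 hy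
    exact ⟨c, hacc, hout⟩
  · obtain ⟨y, hy⟩ := exists_prefixOf_of_isPrefix_succ (outPrefix_prefix_succ c) hout
    exact ⟨y, (hT x y).2 ⟨c, hacc, hout, hy⟩⟩

end TDT

theorem detRegular_domain_buchiDet_general
    {A B : Type}
    (f : (ℕ → A) → Option (ℕ → B)) (hf : DetRegular f) :
    BuchiDet {x : ℕ → A | ∃ y, f x = some y} := by
  obtain ⟨T, hT⟩ := hf
  exact ⟨T.toDBA, fun x => by rw [hT.dom_eq]; exact TDT.toDBA_accepts_iff.symm⟩

/-- The domain of a deterministic regular function is Büchi deterministic. -/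
theorem detRegular_domain_buchiDet
    {A B : Type} [Fintype A] [Fintype B]
    (f : (ℕ → A) → Option (ℕ → B)) (hf : DetRegular f) :
    BuchiDet {x : ℕ → A | ∃ y, f x = some y} :=
  detRegular_domain_buchiDet_general f hf
end

section
/- Let T be an unambiguous, clean and trim 1-nT computing a continuous partial function f : A^ω ⇀ B^ω. Let q₁,q₂ ∈ I, q₁' ∈ F, q₂' ∈ Q, u ∈ A*, u' ∈ A⁺ and α₁,α₁',α₂,α₂' ∈ B* be such that q_i →^{u|α_i} q_i' →^{u'|α_i'} q_i' for i ∈ {1,2}. Then α₁' ≠ ε, and moreover: (i) if α₂' ≠ ε then α₁(α₁')^ω = α₂(α₂')^ω; (ii) if α₂' = ε and there is a final run on some x ∈ A^ω starting in q₂' with infinite output β ∈ B^ω, then α₁(α₁')^ω = α₂β. -/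
/-- A one-way nondeterministic transducer (1-nT). The output function is given on
all triples; it is only relevant on the transition relation. -/
structure NT (A B : Type) where
  Q : Type
  fin : Fintype Q
  I : Set Q
  F : Set Q
  trans : Q → A → Q → Prop
  out : Q → A → Q → List B

attribute [instance] NT.fin

namespace NT

variable {A B : Type}

/-- `FinRun T q u α q'` means `q →^{u|α} q'`. -/
inductive FinRun (T : NT A B) : T.Q → List A → List B → T.Q → Prop
  | nil (q : T.Q) : FinRun T q [] [] q
  | cons {q q' q'' : T.Q} {a : A} {u : List A} {α : List B} :
      T.trans q a q' → FinRun T q' u α q'' →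
      FinRun T q (a :: u) (T.out q a q' ++ α) q''

/-- Infinite run on `x` (the `i`-th transition reads `x i`). -/
def IsRun (T : NT A B) (x : ℕ → A) (ρ : ℕ → T.Q) : Prop :=
  ∀ i : ℕ, T.trans (ρ i) (x i) (ρ (i + 1))

/-- Büchi condition: final states are visited infinitely often. -/
def Final (T : NT A B) (ρ : ℕ → T.Q) : Prop :=
  ∀ i : ℕ, ∃ j : ℕ, i ≤ j ∧ ρ j ∈ T.F

/-- Accepting run: an initial and final run. -/
def Accepting (T : NT A B) (x : ℕ → A) (ρ : ℕ → T.Q) : Prop :=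
  T.IsRun x ρ ∧ ρ 0 ∈ T.I ∧ T.Final ρ

/-- Output along the first `n` transitions of a run. -/
def outPrefix (T : NT A B) (x : ℕ → A) (ρ : ℕ → T.Q) (n : ℕ) : List B :=
  ((List.range n).map (fun i => T.out (ρ i) (x i) (ρ (i + 1)))).flatten

/-- The output along the run is infinite. -/
def InfiniteOutput (T : NT A B) (x : ℕ → A) (ρ : ℕ → T.Q) : Prop :=
  ∀ m : ℕ, ∃ n : ℕ, m ≤ (T.outPrefix x ρ n).length

/-- The (infinite) output along the run equals `y`. -/
def OutEq (T : NT A B) (x : ℕ → A) (ρ : ℕ → T.Q) (y : ℕ → B) : Prop :=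
  ∀ n : ℕ, PrefixOf (T.outPrefix x ρ n) y

/-- Every input labels at most one accepting run. -/
def Unambiguous (T : NT A B) : Prop :=
  ∀ x ρ₁ ρ₂, T.Accepting x ρ₁ → T.Accepting x ρ₂ → ρ₁ = ρ₂

/-- The partial function computed by an unambiguous 1-nT. -/
def Computes (T : NT A B) (f : (ℕ → A) → Option (ℕ → B)) : Prop :=
  ∀ x y, f x = some y ↔
    ∃ ρ, T.Accepting x ρ ∧ T.InfiniteOutput x ρ ∧ T.OutEq x ρ y

/-- Every state occurs in some accepting run. -/
def Trim (T : NT A B) : Prop :=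
  ∀ q : T.Q, ∃ x ρ, T.Accepting x ρ ∧ ∃ i, ρ i = q

/-- The output along every accepting run is infinite. -/
def Clean (T : NT A B) : Prop :=
  ∀ x ρ, T.Accepting x ρ → T.InfiniteOutput x ρ

end NT

/-- Continuity (for the Cantor topology) of a partial function on infinite words. -/
def ContinuousPartial {A B : Type} (f : (ℕ → A) → Option (ℕ → B)) : Prop :=
  ∀ x fx, f x = some fx → ∀ n : ℕ, ∃ p : ℕ, ∀ y fy, f y = some fy →
    (∀ i < p, x i = y i) → ∀ i < n, fx i = fy i

/-!
Going around the loop on `u'` forever from `q₁'` gives an accepting lasso run on `u u'^ω`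
whose output is `α₁ α₁'^ω`; since `T` is clean this output is infinite, so `α₁' ≠ ε`, and it is
`y = f(u u'^ω)`. For a final run from `q₂'` on some `z`, the input `u u'^k z` is accepted from `q₂`,
with an output that starts with `α₂ α₂'^k` and then follows the run on `z`. As `k → ∞` these inputs
converge to `u u'^ω`, so by continuity their images agree with `y` on longer and longer prefixes.
Trimness supplies such a `z`, which gives (i); when `α₂' = ε` every one of these images is `α₂ β`,
which gives (ii).
-/

section Words

variable {α : Type}

lemma listPrepend_of_lt {l : List α} {i : ℕ} (s : ℕ → α) (h : i < l.length) :
    listPrepend l s i = l[i] :=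
  dif_pos h

lemma listPrepend_length_add (l : List α) (s : ℕ → α) (i : ℕ) :
    listPrepend l s (l.length + i) = s i := by
  simp [listPrepend]

@[simp] lemma listPrepend_nil (s : ℕ → α) : listPrepend [] s = s :=
  funext fun i => by simpa using listPrepend_length_add [] s i

lemma listPrepend_cons_succ (a : α) (l : List α) (s : ℕ → α) (i : ℕ) :
    listPrepend (a :: l) s (i + 1) = listPrepend l s i := by
  simp [listPrepend]

lemma listPrepend_eq_appendStream' (l : List α) (s : ℕ → α) : listPrepend l s = l ++ₛ s := by
  funext i
  rcases lt_or_ge i l.length with h | h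
  · exact (listPrepend_of_lt s h).trans (Stream'.get_append_left _ _ _ h).symm
  · obtain ⟨j, rfl⟩ := Nat.exists_eq_add_of_le h
    exact (listPrepend_length_add l s j).trans (Stream'.get_append_right j l s).symm

lemma listPrepend_append (l₁ l₂ : List α) (s : ℕ → α) :
    listPrepend (l₁ ++ l₂) s = listPrepend l₁ (listPrepend l₂ s) := by
  funext i
  simp only [listPrepend, List.length_append]
  split_ifs <;> first | omega | simp_all [Nat.sub_sub]

lemma exists_listPrepend_eq_self {v : List α} (hv : v ≠ []) : ∃ s, listPrepend v s = s :=
  ⟨Stream'.cycle v hv, (listPrepend_eq_appendStream' v _).trans (Stream'.cycle_eq v hv).symm⟩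

@[simp] lemma powList_zero (v : List α) : powList v 0 = [] := rfl

lemma powList_succ (v : List α) (k : ℕ) : powList v (k + 1) = v ++ powList v k := by
  simp [powList, List.replicate_succ]

@[simp] lemma powList_nil (k : ℕ) : powList ([] : List α) k = [] := by
  simp [powList]

@[simp] lemma powList_length (v : List α) (k : ℕ) : (powList v k).length = k * v.length := by
  induction k with
  | zero => simp
  | succ k ih => rw [powList_succ, List.length_append, ih, Nat.succ_mul, Nat.add_comm]

lemma powList_prefix (v : List α) {n k : ℕ} (h : n ≤ k) : powList v n <+: powList v k := by
  obtain ⟨j, rfl⟩ := Nat.exists_eq_add_of_le h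
  exact ⟨powList v j, by simp only [powList, List.replicate_add, List.flatten_append]⟩

lemma listPrepend_powList_eq_self {v : List α} {s : ℕ → α} (h : listPrepend v s = s) (k : ℕ) :
    listPrepend (powList v k) s = s := by
  induction k with
  | zero => simp
  | succ k ih => rw [powList_succ, listPrepend_append, ih, h]

lemma PrefixOf.listPrepend {l : List α} {y : ℕ → α} (w : List α) (h : PrefixOf l y) :
    PrefixOf (w ++ l) (listPrepend w y) := by
  intro i hi
  rcases lt_or_ge i w.length with h' | h'
  · simp [List.getElem_append_left h', listPrepend_of_lt y h']
  · obtain ⟨j, rfl⟩ := Nat.exists_eq_add_of_le h'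
    simp only [List.get_eq_getElem, List.getElem_append_right h', listPrepend_length_add]
    simpa using h j (by simpa using hi)

lemma PrefixOf.of_isPrefix {l₁ l₂ : List α} {y : ℕ → α} (h : PrefixOf l₂ y) (h₁₂ : l₁ <+: l₂) :
    PrefixOf l₁ y := fun i hi => by
  simpa [h₁₂.getElem hi] using h i (hi.trans_le h₁₂.length_le)

lemma PrefixOf.of_eqOn {l : List α} {y z : ℕ → α} (h : PrefixOf l y)
    (hyz : ∀ i < l.length, y i = z i) : PrefixOf l z :=
  fun i hi => (h i hi).trans (hyz i hi)

lemma PrefixOf.apply_eq {l : List α} {y z : ℕ → α} (hy : PrefixOf l y) (hz : PrefixOf l z)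
    {i : ℕ} (hi : i < l.length) : y i = z i :=
  (hy i hi).symm.trans (hz i hi)

end Words

namespace NT

variable {A B : Type} {T : NT A B}

@[simp] lemma outPrefix_zero (x : ℕ → A) (ρ : ℕ → T.Q) : T.outPrefix x ρ 0 = [] := rfl

lemma outPrefix_one (x : ℕ → A) (ρ : ℕ → T.Q) :
    T.outPrefix x ρ 1 = T.out (ρ 0) (x 0) (ρ 1) := by
  simp [outPrefix]

lemma outPrefix_add (x : ℕ → A) (ρ : ℕ → T.Q) (m n : ℕ) :
    T.outPrefix x ρ (m + n) =
      T.outPrefix x ρ m ++ T.outPrefix (fun i => x (m + i)) (fun i => ρ (m + i)) n := by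
  simp only [outPrefix, List.range_add, List.map_append, List.flatten_append, List.map_map]
  rfl

lemma outPrefix_prefix (x : ℕ → A) (ρ : ℕ → T.Q) {m n : ℕ} (h : m ≤ n) :
    T.outPrefix x ρ m <+: T.outPrefix x ρ n := by
  obtain ⟨j, rfl⟩ := Nat.exists_eq_add_of_le h
  rw [outPrefix_add]
  exact List.prefix_append _ _

lemma exists_outEq {x : ℕ → A} {ρ : ℕ → T.Q} (h : T.InfiniteOutput x ρ) :
    ∃ y, T.OutEq x ρ y := by
  choose N hN using fun i => h (i + 1)
  refine ⟨fun i => (T.outPrefix x ρ (N i))[i]'(hN i), fun n i hi => ?_⟩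
  have hm := T.outPrefix_prefix x ρ (le_max_left n (N i))
  have hN' := T.outPrefix_prefix x ρ (le_max_right n (N i))
  simp only [List.get_eq_getElem, hm.getElem hi, hN'.getElem (hN i)]

lemma FinRun.append {q q' q'' : T.Q} {u v : List A} {α β : List B}
    (h₁ : T.FinRun q u α q') (h₂ : T.FinRun q' v β q'') :
    T.FinRun q (u ++ v) (α ++ β) q'' := by
  induction h₁ with
  | nil => simpa using h₂
  | cons htr _ ih =>
    rw [List.cons_append, List.append_assoc]
    exact FinRun.cons htr (ih h₂)

lemma FinRun.pow {p : T.Q} {v : List A} {β : List B} (h : T.FinRun p v β p) (k : ℕ) :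
    T.FinRun p (powList v k) (powList β k) p := by
  induction k with
  | zero => exact FinRun.nil p
  | succ k ih => rw [powList_succ, powList_succ]; exact h.append ih

/-- The visited states do not depend on the continuation `ρ`, so this also applies when `ρ` is
the periodic run being built from the states themselves. -/
lemma FinRun.exists_states {q q' : T.Q} {u : List A} {α : List B} (h : T.FinRun q u α q') :
    ∃ ss : List T.Q, ss.length = u.length ∧ ∀ (x : ℕ → A) (ρ : ℕ → T.Q), ρ 0 = q' →
      listPrepend ss ρ 0 = q ∧
      (∀ i < u.length, T.trans (listPrepend ss ρ i) (listPrepend u x i)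
        (listPrepend ss ρ (i + 1))) ∧
      T.outPrefix (listPrepend u x) (listPrepend ss ρ) u.length = α := by
  induction h with
  | nil q => exact ⟨[], rfl, fun x ρ hρ => by simpa using hρ⟩
  | @cons q q₁ _ a u α htr _ ih =>
    obtain ⟨ss, hlen, hss⟩ := ih
    refine ⟨q :: ss, by simp [hlen], fun x ρ hρ => ?_⟩
    obtain ⟨h0, hstep, hout⟩ := hss x ρ hρ
    have hhead : listPrepend (q :: ss) ρ 0 = q := listPrepend_of_lt ρ (by simp)
    refine ⟨hhead, fun i hi => ?_, ?_⟩
    · cases i with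
      | zero =>
        rw [hhead, listPrepend_of_lt x (by simp), listPrepend_cons_succ, h0]
        exact htr
      | succ i =>
        simp only [listPrepend_cons_succ]
        exact hstep i (by simpa using hi)
    · rw [List.length_cons, Nat.add_comm, outPrefix_add, outPrefix_one, hhead,
        listPrepend_of_lt x (by simp), listPrepend_cons_succ, h0]
      simp only [Nat.add_comm 1, listPrepend_cons_succ, hout]
      rfl


lemma FinRun.exists_isRun_listPrepend {q q' : T.Q} {u : List A} {α : List B}
    (h : T.FinRun q u α q') {x : ℕ → A} {ρ : ℕ → T.Q} (hρ : T.IsRun x ρ) (hρ0 : ρ 0 = q') :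
    ∃ σ : ℕ → T.Q, T.IsRun (listPrepend u x) σ ∧ σ 0 = q ∧ (∀ i, σ (u.length + i) = ρ i) ∧
      ∀ n, T.outPrefix (listPrepend u x) σ (u.length + n) = α ++ T.outPrefix x ρ n := by
  obtain ⟨ss, hlen, hss⟩ := h.exists_states
  obtain ⟨h0, hstep, hout⟩ := hss x ρ hρ0
  have hshift : ∀ i, listPrepend ss ρ (u.length + i) = ρ i :=
    hlen ▸ listPrepend_length_add ss ρ
  refine ⟨listPrepend ss ρ, fun i => ?_, h0, hshift, fun n => ?_⟩
  · rcases lt_or_ge i u.length with hi | hi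
    · exact hstep i hi
    · obtain ⟨j, rfl⟩ := Nat.exists_eq_add_of_le hi
      rw [Nat.add_assoc, hshift, hshift, listPrepend_length_add]
      exact hρ j
  · rw [outPrefix_add, hout]
    simp only [hshift, listPrepend_length_add]

lemma FinRun.exists_isRun_of_listPrepend_eq_self {p : T.Q} {v : List A} {β : List B}
    (h : T.FinRun p v β p) (hv : v ≠ []) {x : ℕ → A} (hx : listPrepend v x = x) :
    ∃ σ : ℕ → T.Q, T.IsRun x σ ∧ ∀ k, σ (k * v.length) = p ∧
      T.outPrefix x σ (k * v.length) = powList β k := by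
  obtain ⟨ss, hlen, hss⟩ := h.exists_states
  have hss_ne : ss ≠ [] := by
    rintro rfl
    exact hv (List.length_eq_zero_iff.mp hlen.symm)
  obtain ⟨σ, hσ⟩ := exists_listPrepend_eq_self hss_ne
  have hpos : 0 < ss.length := List.length_pos_iff.mpr hss_ne
  have hσ0 : σ 0 = p := by
    rw [← hσ, listPrepend_of_lt σ hpos, ← listPrepend_of_lt (fun _ => p) hpos]
    exact (hss x (fun _ => p) rfl).1
  obtain ⟨-, hstep, hout⟩ := hss x σ hσ0
  rw [hσ, hx] at hstep hout
  have hσ_shift : ∀ i, σ (v.length + i) = σ i := fun i => by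
    rw [← hlen]; conv_lhs => rw [← hσ]
    exact listPrepend_length_add ss σ i
  have hx_shift : ∀ i, x (v.length + i) = x i := fun i => by
    conv_lhs => rw [← hx]
    exact listPrepend_length_add v x i
  refine ⟨σ, fun i => ?_, fun k => ?_⟩
  · induction i using Nat.strong_induction_on with
    | _ i ih =>
      rcases lt_or_ge i v.length with hi | hi
      · exact hstep i hi
      · obtain ⟨j, rfl⟩ := Nat.exists_eq_add_of_le hi
        rw [Nat.add_assoc, hσ_shift, hσ_shift, hx_shift]
        exact ih j (by omega)
  · induction k with
    | zero => simpa using hσ0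
    | succ k ih =>
      rw [Nat.succ_mul, Nat.add_comm, hσ_shift, outPrefix_add, hout, powList_succ]
      simp only [hσ_shift, hx_shift]
      exact ⟨ih.1, congrArg (β ++ ·) ih.2⟩

lemma exists_accepting_lasso {q q' : T.Q} {u v : List A} {α β : List B}
    (h : T.FinRun q u α q') (hq : q ∈ T.I) (hq' : q' ∈ T.F) (hloop : T.FinRun q' v β q')
    (hv : v ≠ []) {x : ℕ → A} (hx : listPrepend v x = x) :
    ∃ σ, T.Accepting (listPrepend u x) σ ∧
      ∀ k, T.outPrefix (listPrepend u x) σ (u.length + k * v.length) = α ++ powList β k := by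
  obtain ⟨ρ, hρ, hρk⟩ := hloop.exists_isRun_of_listPrepend_eq_self hv hx
  obtain ⟨σ, hσ, hσ0, hσρ, hσout⟩ := h.exists_isRun_listPrepend hρ (by simpa using (hρk 0).1)
  refine ⟨σ, ⟨hσ, hσ0 ▸ hq, fun i => ?_⟩, fun k => by rw [hσout, (hρk k).2]⟩
  have hm : 0 < v.length := List.length_pos_iff.mpr hv
  refine ⟨u.length + i * v.length, ?_, by rw [hσρ, (hρk i).1]; exact hq'⟩
  nlinarith

lemma ne_nil_of_outPrefix_eq_powList {x : ℕ → A} {σ : ℕ → T.Q} (hinf : T.InfiniteOutput x σ)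
    {c m : ℕ} (hm : 0 < m) {α β : List B}
    (hout : ∀ k, T.outPrefix x σ (c + k * m) = α ++ powList β k) : β ≠ [] := by
  rintro rfl
  obtain ⟨n, hn⟩ := hinf (α.length + 1)
  have hle := (T.outPrefix_prefix x σ (show n ≤ c + n * m by nlinarith)).length_le
  rw [hout n, powList_nil, List.append_nil] at hle
  omega

lemma Computes.exists_apply_eq_some {f : (ℕ → A) → Option (ℕ → B)} (hT : T.Computes f)
    (hCl : T.Clean) {x : ℕ → A} {σ : ℕ → T.Q} (hσ : T.Accepting x σ) :
    ∃ y, f x = some y ∧ T.OutEq x σ y := by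
  obtain ⟨y, hy⟩ := exists_outEq (hCl x σ hσ)
  exact ⟨y, (hT x y).mpr ⟨σ, hσ, hCl x σ hσ, hy⟩, hy⟩

lemma Computes.exists_apply_listPrepend_eq_some {f : (ℕ → A) → Option (ℕ → B)}
    (hT : T.Computes f) (hCl : T.Clean) {q q' : T.Q} {u : List A} {α : List B}
    (h : T.FinRun q u α q') (hq : q ∈ T.I) {z : ℕ → A} {τ : ℕ → T.Q} (hτ : T.IsRun z τ)
    (hτ0 : τ 0 = q') (hτF : T.Final τ) :
    ∃ w, f (listPrepend u z) = some w ∧ ∀ n, PrefixOf (α ++ T.outPrefix z τ n) w := by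
  obtain ⟨σ, hσ, hσ0, hστ, hσout⟩ := h.exists_isRun_listPrepend hτ hτ0
  have hacc : T.Accepting (listPrepend u z) σ := by
    refine ⟨hσ, hσ0 ▸ hq, fun i => ?_⟩
    obtain ⟨j, hij, hj⟩ := hτF i
    exact ⟨u.length + j, by omega, by rwa [hστ]⟩
  obtain ⟨w, hw, hσw⟩ := hT.exists_apply_eq_some hCl hacc
  exact ⟨w, hw, fun n => hσout n ▸ hσw (u.length + n)⟩

lemma Trim.exists_final_run (hTr : T.Trim) (q : T.Q) :
    ∃ z τ, T.IsRun z τ ∧ τ 0 = q ∧ T.Final τ := by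
  obtain ⟨x, ρ, ⟨hρ, -, hρF⟩, i, rfl⟩ := hTr q
  refine ⟨fun j => x (i + j), fun j => ρ (i + j), fun j => hρ (i + j), rfl, fun j => ?_⟩
  obtain ⟨k, hk, hkF⟩ := hρF (i + j)
  exact ⟨k - i, by omega, by simpa [Nat.add_sub_cancel' (show i ≤ k by omega)] using hkF⟩

end NT

lemma ContinuousPartial.eventually_eqOn_pumped {A B : Type} {f : (ℕ → A) → Option (ℕ → B)}
    (hf : ContinuousPartial f) {u v : List A} (hv : v ≠ []) {x : ℕ → A}
    (hx : listPrepend v x = x) {y : ℕ → B} (hy : f (listPrepend u x) = some y) (N : ℕ) :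
    ∃ K, ∀ k ≥ K, ∀ z w, f (listPrepend (u ++ powList v k) z) = some w → ∀ i < N, y i = w i := by
  obtain ⟨p, hp⟩ := hf _ y hy N
  refine ⟨p, fun k hk z w hw => hp _ w hw fun i hi => ?_⟩
  have hm : 0 < v.length := List.length_pos_iff.mpr hv
  have hi' : i < (u ++ powList v k).length := by
    rw [List.length_append, powList_length]; nlinarith
  rw [← listPrepend_powList_eq_self hx k, ← listPrepend_append, listPrepend_of_lt _ hi',
    listPrepend_of_lt _ hi']

theorem continuity_loops_general
    {A B : Type}
    (T : NT A B) (f : (ℕ → A) → Option (ℕ → B))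
    (hCl : T.Clean) (hTr : T.Trim)
    (hT : T.Computes f) (hcont : ContinuousPartial f)
    (q₁ q₂ q₁' q₂' : T.Q) (hq₁ : q₁ ∈ T.I) (hq₂ : q₂ ∈ T.I) (hq₁' : q₁' ∈ T.F)
    (u u' : List A) (hu' : u' ≠ [])
    (α₁ α₁' α₂ α₂' : List B)
    (h₁ : T.FinRun q₁ u α₁ q₁') (h₁' : T.FinRun q₁' u' α₁' q₁')
    (h₂ : T.FinRun q₂ u α₂ q₂') (h₂' : T.FinRun q₂' u' α₂' q₂') :
    α₁' ≠ [] ∧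
    (α₂' ≠ [] → ∃ y : ℕ → B, EqUVomega α₁ α₁' y ∧ EqUVomega α₂ α₂' y) ∧
    (α₂' = [] → ∀ (x : ℕ → A) (ρ : ℕ → T.Q) (β : ℕ → B),
      T.IsRun x ρ → ρ 0 = q₂' → T.Final ρ →
      T.InfiniteOutput x ρ → T.OutEq x ρ β →
      EqUVomega α₁ α₁' (listPrepend α₂ β)) := by
  -- `x'` is `u'^ω`
  obtain ⟨x', hx'⟩ := exists_listPrepend_eq_self hu'
  obtain ⟨σ, hσ, hσout⟩ := NT.exists_accepting_lasso h₁ hq₁ hq₁' h₁' hu' hx'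
  obtain ⟨y, hfy, hσy⟩ := hT.exists_apply_eq_some hCl hσ
  have hy : EqUVomega α₁ α₁' y := fun n => hσout n ▸ hσy _
  have hpump : ∀ k {z τ}, T.IsRun z τ → τ 0 = q₂' → T.Final τ → ∃ w,
      f (listPrepend (u ++ powList u' k) z) = some w ∧
        ∀ n, PrefixOf (α₂ ++ powList α₂' k ++ T.outPrefix z τ n) w := fun k _ _ hτ hτ0 hτF =>
    hT.exists_apply_listPrepend_eq_some hCl (h₂.append (h₂'.pow k)) hq₂ hτ hτ0 hτF
  refine ⟨NT.ne_nil_of_outPrefix_eq_powList (hCl _ _ hσ) (List.length_pos_iff.mpr hu') hσout,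
    fun _ => ⟨y, hy, fun n => ?_⟩, fun hα₂' z τ β hτ hτ0 hτF hτinf hβ n => ?_⟩
  · obtain ⟨z, τ, hτ, hτ0, hτF⟩ := hTr.exists_final_run q₂'
    obtain ⟨K, hK⟩ := hcont.eventually_eqOn_pumped hu' hx' hfy (α₂ ++ powList α₂' n).length
    obtain ⟨w, hfw, hw⟩ := hpump (max n K) hτ hτ0 hτF
    have hprefix : α₂ ++ powList α₂' n <+: α₂ ++ powList α₂' (max n K) ++ T.outPrefix z τ 0 := by
      simpa using powList_prefix α₂' (le_max_left n K)
    exact ((hw 0).of_isPrefix hprefix).of_eqOn fun i hi =>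
      (hK _ (le_max_right n K) z w hfw i hi).symm
  · subst hα₂'
    obtain ⟨K, hK⟩ := hcont.eventually_eqOn_pumped hu' hx' hfy (α₁ ++ powList α₁' n).length
    obtain ⟨w, hfw, hw⟩ := hpump K hτ hτ0 hτF
    obtain ⟨m, hm⟩ := hτinf (α₁ ++ powList α₁' n).length
    have hwm : PrefixOf (α₂ ++ T.outPrefix z τ m) w := by simpa using hw m
    refine (hy n).of_eqOn fun i hi => (hK K le_rfl z w hfw i hi).trans ?_
    exact hwm.apply_eq ((hβ m).listPrepend α₂) (by rw [List.length_append]; omega)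

/-- Continuity lemma on loops of a 1-nT computing a continuous function. -/
theorem continuity_loops
    {A B : Type} [Fintype A] [Fintype B]
    (T : NT A B) (f : (ℕ → A) → Option (ℕ → B))
    (hU : T.Unambiguous) (hCl : T.Clean) (hTr : T.Trim)
    (hT : T.Computes f) (hcont : ContinuousPartial f)
    (q₁ q₂ q₁' q₂' : T.Q) (hq₁ : q₁ ∈ T.I) (hq₂ : q₂ ∈ T.I) (hq₁' : q₁' ∈ T.F)
    (u u' : List A) (hu' : u' ≠ [])
    (α₁ α₁' α₂ α₂' : List B)
    (h₁ : T.FinRun q₁ u α₁ q₁') (h₁' : T.FinRun q₁' u' α₁' q₁')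
    (h₂ : T.FinRun q₂ u α₂ q₂') (h₂' : T.FinRun q₂' u' α₂' q₂') :
    α₁' ≠ [] ∧
    (α₂' ≠ [] → ∃ y : ℕ → B, EqUVomega α₁ α₁' y ∧ EqUVomega α₂ α₂' y) ∧
    (α₂' = [] → ∀ (x : ℕ → A) (ρ : ℕ → T.Q) (β : ℕ → B),
      T.IsRun x ρ → ρ 0 = q₂' → T.Final ρ →
      T.InfiniteOutput x ρ → T.OutEq x ρ β →
      EqUVomega α₁ α₁' (listPrepend α₂ β)) :=
  continuity_loops_general T f hCl hTr hT hcont q₁ q₂ q₁' q₂' hq₁ hq₂ hq₁' u u' hu' α₁ α₁' α₂ α₂' h₁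
    h₁' h₂ h₂'
end

section
/- Let T be a 1-nT with state set Q. A set C ⊆ Q is compatible if and only if there exist a function d : C → Q and words u,u' ∈ A* such that: for all q ∈ C there are runs q →^u d(q) and d(q) →^{u'} d(q); there exists q ∈ C with d(q) ∈ F; and u' ≠ ε with |u| ≤ |Q|^{|Q|} and |u'| ≤ |Q|^{|Q|}. -/
namespace NT

variable {A B : Type}

/-- A compatible set of states: a common infinite future, one branch of which is final. -/
def Compatible (T : NT A B) (C : Set T.Q) : Prop :=
  ∃ (x : ℕ → A) (ρ : T.Q → ℕ → T.Q),
    (∀ q ∈ C, ρ q 0 = q ∧ T.IsRun x (ρ q)) ∧ ∃ q ∈ C, T.Final (ρ q)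

/-- `(C,u,D)` is a pre-step, with predecessor map `pre` and outputs `val`. -/
def PreStepOn (T : NT A B) (C : Set T.Q) (u : List A) (D : Set T.Q)
    (pre : T.Q → T.Q) (val : T.Q → List B) : Prop :=
  T.Compatible C ∧ T.Compatible D ∧
  (∀ q ∈ D, pre q ∈ C ∧ T.FinRun (pre q) u (val q) q) ∧
  (∀ q ∈ D, ∀ p ∈ C, (∃ α, T.FinRun p u α q) → p = pre q)

/-- `(C,u,D)` is a step: a pre-step with surjective predecessor map. -/
def StepOn (T : NT A B) (C : Set T.Q) (u : List A) (D : Set T.Q)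
    (pre : T.Q → T.Q) (val : T.Q → List B) : Prop :=
  T.PreStepOn C u D pre val ∧ ∀ p ∈ C, ∃ q ∈ D, pre q = p

/-- `(J,u,C)` is an initial step. -/
def InitStepOn (T : NT A B) (J : Set T.Q) (u : List A) (C : Set T.Q)
    (pre : T.Q → T.Q) (val : T.Q → List B) : Prop :=
  J ⊆ T.I ∧ T.StepOn J u C pre val

/-- `com` is the longest common prefix of the `val q` (`q ∈ C`) and
`adv q` is the advance of `q`, i.e. `val q = com ++ adv q`. -/
def AdvData (T : NT A B) (C : Set T.Q) (val : T.Q → List B)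
    (com : List B) (adv : T.Q → List B) : Prop :=
  (∀ q ∈ C, val q = com ++ adv q) ∧
  (∀ c : List B, (∀ q ∈ C, c <+: val q) → c <+: com)

end NT

/-!
Run the states of `C` simultaneously: a configuration is a map `C → Q`, and `C` is compatible
iff the product automaton on configurations has an infinite run from the identity configuration
in which some fixed coordinate is final infinitely often. By pigeonhole such a run revisits one of
these configurations, which gives a lasso; cutting cycles out of its stem and its loop bounds
both by the number `|Q|^|C| ≤ |Q|^|Q|` of configurations. Conversely a lasso unrolls into a run
on the ultimately periodic word `u u'^ω`.
-/

open Filter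

section LabelledPath

variable {α A : Type*} (r : α → A → α → Prop)

def IsPathOfLength (x : ℕ → A) (g : ℕ → α) (n : ℕ) : Prop :=
  ∀ i < n, r (g i) (x i) (g (i + 1))

def IsInfinitePath (x : ℕ → A) (g : ℕ → α) : Prop :=
  ∀ i, r (g i) (x i) (g (i + 1))

def ReachableIn (s t : α) (n : ℕ) : Prop :=
  ∃ (x : ℕ → A) (g : ℕ → α), g 0 = s ∧ g n = t ∧ IsPathOfLength r x g n

def piRel (ι : Type*) (G : ι → α) (a : A) (G' : ι → α) : Prop :=
  ∀ i, r (G i) a (G' i)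

variable {r} {x y : ℕ → A} {g h : ℕ → α} {n m : ℕ}

theorem isInfinitePath_iff_forall_isPathOfLength :
    IsInfinitePath r x g ↔ ∀ n, IsPathOfLength r x g n :=
  ⟨fun hg _ i _ => hg i, fun hg i => hg (i + 1) i i.lt_add_one⟩

theorem IsPathOfLength.mono (hg : IsPathOfLength r x g n) (hmn : m ≤ n) :
    IsPathOfLength r x g m :=
  fun i hi => hg i (hi.trans_le hmn)

theorem IsPathOfLength.reachableIn {a b : ℕ} (hg : IsPathOfLength r x g n) (hab : a ≤ b)
    (hbn : b ≤ n) : ReachableIn r (g a) (g b) (b - a) :=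
  ⟨fun i => x (a + i), fun i => g (a + i), rfl, by simp only [Nat.add_sub_cancel' hab],
    fun i hi => hg (a + i) (by omega)⟩

theorem isPathOfLength_piRel_iff {ι : Type*} {G : ℕ → ι → α} :
    IsPathOfLength (piRel r ι) x G n ↔ ∀ i, IsPathOfLength r x (fun k => G k i) n :=
  ⟨fun hG i k hk => hG k hk i, fun hG k hk i => hG i k hk⟩

def seqAppend {β : Type*} (n : ℕ) (f g : ℕ → β) : ℕ → β :=
  fun i => if i < n then f i else g (i - n)

theorem seqAppend_add {β : Type*} (f g : ℕ → β) (i : ℕ) :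
    seqAppend n f g (n + i) = g i := by
  simp [seqAppend]

theorem seqAppend_zero {β : Type*} {f g : ℕ → β} (hfg : f n = g 0) :
    seqAppend n f g 0 = f 0 := by
  rcases n.eq_zero_or_pos with rfl | hn
  · simpa [seqAppend] using hfg.symm
  · simp [seqAppend, hn]

theorem IsPathOfLength.append (hg : IsPathOfLength r x g n) (hh : IsPathOfLength r y h m)
    (hgh : g n = h 0) : IsPathOfLength r (seqAppend n x y) (seqAppend n g h) (n + m) := by
  intro i hi
  rcases lt_trichotomy (i + 1) n with hi' | hi' | hi'
  · simpa [seqAppend, hi', (Nat.lt_succ_self i).trans hi'] using hg i (by omega)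
  · have hin : i < n := by omega
    simpa [seqAppend, hin, hi', ← hgh] using hg i hin
  · obtain ⟨k, rfl⟩ : ∃ k, i = n + k := ⟨i - n, by omega⟩
    simpa [seqAppend, Nat.add_assoc] using hh k (by omega)

theorem ReachableIn.trans {s p t : α} (h₁ : ReachableIn r s p n) (h₂ : ReachableIn r p t m) :
    ReachableIn r s t (n + m) := by
  obtain ⟨x, g, rfl, rfl, hg⟩ := h₁
  obtain ⟨y, h, hh0, rfl, hh⟩ := h₂
  exact ⟨_, _, seqAppend_zero hh0.symm, seqAppend_add g h m, hg.append hh hh0.symm⟩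

theorem IsPathOfLength.isInfinitePath_mod (hg : IsPathOfLength r x g n) (hn : 0 < n)
    (hcycle : g n = g 0) : IsInfinitePath r (fun i => x (i % n)) (fun i => g (i % n)) := by
  intro i
  have hsucc : (i + 1) % n = (i % n + 1) % n := ((Nat.mod_modEq i n).add_right 1).symm
  have hlt : i % n < n := Nat.mod_lt i hn
  have hnext : g ((i + 1) % n) = g (i % n + 1) := by
    rcases Nat.lt_or_ge (i % n + 1) n with h | h
    · rw [hsucc, Nat.mod_eq_of_lt h]
    · rw [hsucc, show i % n + 1 = n by omega, Nat.mod_self, hcycle]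
  simpa only [hnext] using hg _ hlt

theorem ReachableIn.exists_isInfinitePath_frequently_eq {s₀ s : α}
    (h₁ : ReachableIn r s₀ s n) (h₂ : ReachableIn r s s m) (hm : 0 < m) :
    ∃ x g, g 0 = s₀ ∧ IsInfinitePath r x g ∧ ∃ᶠ i in atTop, g i = s := by
  obtain ⟨x, g, rfl, rfl, hg⟩ := h₁
  obtain ⟨y, h, hh0, hhm, hh⟩ := h₂
  have hper := hh.isInfinitePath_mod hm (hhm.trans hh0.symm)
  refine ⟨seqAppend n x (fun i => y (i % m)), seqAppend n g (fun i => h (i % m)),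
    seqAppend_zero (by simp [hh0]), ?_, ?_⟩
  · refine isInfinitePath_iff_forall_isPathOfLength.2 fun k => ?_
    exact (hg.append (isInfinitePath_iff_forall_isPathOfLength.1 hper k) (by simp [hh0])).mono
      (Nat.le_add_left k n)
  · refine frequently_atTop.2 fun i => ⟨n + i * m, ?_, ?_⟩
    · exact (Nat.le_mul_of_pos_right i hm).trans (Nat.le_add_left _ n)
    · simp [seqAppend_add, hh0]

theorem exists_lt_le_natCard_map_eq [Finite α] (g : ℕ → α) :
    ∃ a b, a < b ∧ b ≤ Nat.card α ∧ g a = g b := by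
  have hinj : ¬ Function.Injective fun i : Fin (Nat.card α + 1) => g i := fun hinj => by
    simpa using Nat.card_le_card_of_injective _ hinj
  obtain ⟨a, b, hab, hne⟩ := Function.not_injective_iff.1 hinj
  rcases Fin.lt_or_lt_of_ne hne with h | h
  · exact ⟨a, b, h, Nat.lt_succ_iff.1 b.2, hab⟩
  · exact ⟨b, a, h, Nat.lt_succ_iff.1 a.2, hab.symm⟩

theorem ReachableIn.exists_le_natCard [Finite α] {s t : α} (h : ReachableIn r s t n) :
    ∃ n' ≤ Nat.card α, (0 < n → 0 < n') ∧ ReachableIn r s t n' := by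
  induction n using Nat.strong_induction_on with
  | _ n ih =>
  by_cases hn : n ≤ Nat.card α
  · exact ⟨n, hn, id, h⟩
  obtain ⟨x, g, rfl, rfl, hg⟩ := h
  obtain ⟨a, b, hab, hb, hgab⟩ := exists_lt_le_natCard_map_eq g
  have hstem : ReachableIn r (g 0) (g a) a := by simpa using hg.reachableIn a.zero_le (by omega)
  -- cut out the cycle between the repeated states `g a = g b`; as `b < n` the path stays nonempty
  have hcut : ReachableIn r (g 0) (g n) (a + (n - b)) :=
    hstem.trans (hgab ▸ hg.reachableIn (by omega) le_rfl)
  obtain ⟨n', hn', hpos, h'⟩ := ih _ (by omega) hcut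
  exact ⟨n', hn', fun _ => hpos (by omega), h'⟩

theorem IsInfinitePath.exists_lasso [Finite α] {P : α → Prop} (hg : IsInfinitePath r x g)
    (hP : ∃ᶠ i in atTop, P (g i)) :
    ∃ s, P s ∧ (∃ n ≤ Nat.card α, ReachableIn r (g 0) s n) ∧
      ∃ m, 0 < m ∧ m ≤ Nat.card α ∧ ReachableIn r s s m := by
  obtain ⟨a, ha, b, -, hab, hgab⟩ :=
    (Nat.frequently_atTop_iff_infinite.1 hP).exists_lt_map_eq_of_mapsTo (Set.mapsTo_univ g _)
      Set.finite_univ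
  have hpath := isInfinitePath_iff_forall_isPathOfLength.1 hg b
  obtain ⟨n, hn, -, hu⟩ := (hpath.reachableIn a.zero_le hab.le).exists_le_natCard
  obtain ⟨m, hm, hpos, hu'⟩ := (hpath.reachableIn hab.le le_rfl).exists_le_natCard
  rw [← hgab] at hu'
  exact ⟨g a, ha, ⟨n, hn, hu⟩, m, hpos (by omega), hm, hu'⟩

end LabelledPath

theorem natCard_subtype_fun_le_card_pow {β : Type*} [Fintype β] (C : Set β) :
    Nat.card (C → β) ≤ Fintype.card β ^ Fintype.card β := by
  have hinj : Function.Injective fun f : C → β => Function.extend Subtype.val f id :=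
    fun f f' hff' => funext fun c => by
      simpa [Subtype.val_injective.extend_apply] using congrFun hff' c
  simpa [Nat.card_fun] using Nat.card_le_card_of_injective _ hinj

namespace NT

variable {A B : Type} (T : NT A B)

theorem exists_finRun_ofFn {x : ℕ → A} {g : ℕ → T.Q} {n : ℕ}
    (hg : IsPathOfLength T.trans x g n) :
    ∃ α, T.FinRun (g 0) (List.ofFn fun i : Fin n => x i) α (g n) := by
  induction n generalizing x g with
  | zero => exact ⟨[], FinRun.nil _⟩
  | succ n ih =>
    obtain ⟨α, hα⟩ := ih (x := fun i => x (i + 1)) (g := fun i => g (i + 1))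
      fun i hi => hg (i + 1) (by omega)
    refine ⟨T.out (g 0) (x 0) (g 1) ++ α, ?_⟩
    rw [List.ofFn_succ]
    exact FinRun.cons (hg 0 n.succ_pos) hα

variable {T}

theorem FinRun.exists_isPathOfLength {q q' : T.Q} {w : List A} {β : List B}
    (h : T.FinRun q w β q') (a₀ : A) :
    ∃ g : ℕ → T.Q, g 0 = q ∧ g w.length = q' ∧
      IsPathOfLength T.trans (fun i => w.getD i a₀) g w.length := by
  induction h with
  | nil q => exact ⟨fun _ => q, rfl, rfl, fun i hi => absurd hi (Nat.not_lt_zero i)⟩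
  | @cons q p _ a _ _ hstep _ ih =>
    obtain ⟨g, hg0, hgn, hg⟩ := ih
    refine ⟨fun i => Nat.casesOn i q g, rfl, hgn, ?_⟩
    rintro (_ | i) hi
    · simpa [hg0] using hstep
    · simpa using hg i (by simpa using hi)

theorem reachableIn_piRel_iff [Nonempty A] {ι : Type*} {G₀ G₁ : ι → T.Q} {n : ℕ} :
    ReachableIn (piRel T.trans ι) G₀ G₁ n ↔
      ∃ w : List A, w.length = n ∧ ∀ i, ∃ β, T.FinRun (G₀ i) w β (G₁ i) := by
  constructor
  · rintro ⟨x, G, rfl, rfl, hG⟩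
    exact ⟨_, List.length_ofFn, fun i => T.exists_finRun_ofFn (isPathOfLength_piRel_iff.1 hG i)⟩
  · rintro ⟨w, rfl, hw⟩
    choose β hβ using hw
    choose g hg0 hgn hg using fun i => (hβ i).exists_isPathOfLength (Classical.arbitrary A)
    exact ⟨_, fun k i => g i k, funext hg0, funext hgn, isPathOfLength_piRel_iff.2 hg⟩

theorem final_iff_frequently {ρ : ℕ → T.Q} : T.Final ρ ↔ ∃ᶠ i in atTop, ρ i ∈ T.F :=
  frequently_atTop.symm

theorem compatible_iff_exists_isInfinitePath {C : Set T.Q} :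
    T.Compatible C ↔ ∃ (x : ℕ → A) (K : ℕ → C → T.Q), K 0 = Subtype.val ∧
      IsInfinitePath (piRel T.trans C) x K ∧ ∃ q : C, ∃ᶠ i in atTop, K i q ∈ T.F := by
  constructor
  · rintro ⟨x, ρ, hρ, q, hq, hfin⟩
    exact ⟨x, fun i c => ρ c i, funext fun c => (hρ c c.2).1, fun i c => (hρ c c.2).2 i,
      ⟨q, hq⟩, final_iff_frequently.1 hfin⟩
  · rintro ⟨x, K, hK0, hK, q, hfin⟩
    classical
    refine ⟨x, fun p i => if hp : p ∈ C then K i ⟨p, hp⟩ else p, fun p hp => ?_, q, q.2,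
      ?_⟩
    · simp only [dif_pos hp]
      exact ⟨congrFun hK0 ⟨p, hp⟩, fun i => hK i ⟨p, hp⟩⟩
    · simpa [final_iff_frequently] using hfin

end NT

theorem compatible_characterization_general
    {A B : Type}
    (T : NT A B) (C : Set T.Q) :
    T.Compatible C ↔
    ∃ (d : T.Q → T.Q) (u u' : List A),
      (∀ q ∈ C, (∃ α, T.FinRun q u α (d q)) ∧ (∃ α', T.FinRun (d q) u' α' (d q))) ∧
      (∃ q ∈ C, d q ∈ T.F) ∧
      u' ≠ [] ∧
      u.length ≤ Fintype.card T.Q ^ Fintype.card T.Q ∧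
      u'.length ≤ Fintype.card T.Q ^ Fintype.card T.Q := by
  rw [T.compatible_iff_exists_isInfinitePath]
  constructor
  · rintro ⟨x, K, hK0, hK, q₀, hfin⟩
    have : Nonempty A := ⟨x 0⟩
    obtain ⟨s, hs, ⟨n, hn, hu⟩, m, hm, hm', hu'⟩ :=
      hK.exists_lasso (P := fun s => s q₀ ∈ T.F) hfin
    rw [hK0, NT.reachableIn_piRel_iff] at hu
    obtain ⟨u, rfl, hrun⟩ := hu
    obtain ⟨u', rfl, hrun'⟩ := NT.reachableIn_piRel_iff.1 hu'
    have hd : ∀ c : C, Function.extend Subtype.val s id c = s c :=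
      Subtype.val_injective.extend_apply s id
    have hcard := natCard_subtype_fun_le_card_pow C
    refine ⟨Function.extend Subtype.val s id, u, u', fun q hq => ?_,
      ⟨q₀, q₀.2, by rwa [hd]⟩, List.ne_nil_of_length_pos hm, hn.trans hcard,
      hm'.trans hcard⟩
    rw [hd ⟨q, hq⟩]
    exact ⟨hrun ⟨q, hq⟩, hrun' ⟨q, hq⟩⟩
  · rintro ⟨d, u, u', hruns, ⟨q₀, hq₀, hF⟩, hne, -, -⟩
    have : Nonempty A := ⟨u'.head hne⟩
    have hu : ReachableIn (piRel T.trans C) Subtype.val (fun c => d c) u.length :=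
      NT.reachableIn_piRel_iff.2 ⟨u, rfl, fun c => (hruns c c.2).1⟩
    have hu' : ReachableIn (piRel T.trans C) (fun c => d c) (fun c => d c) u'.length :=
      NT.reachableIn_piRel_iff.2 ⟨u', rfl, fun c => (hruns c c.2).2⟩
    obtain ⟨x, K, hK0, hK, hfreq⟩ :=
      hu.exists_isInfinitePath_frequently_eq hu' (List.length_pos_of_ne_nil hne)
    exact ⟨x, K, hK0, hK, ⟨q₀, hq₀⟩, hfreq.mono fun i hi => by rw [hi]; exact hF⟩

/-- Pumping characterization of compatible sets. -/
theorem compatible_characterization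
    {A B : Type} [Fintype A] [Fintype B]
    (T : NT A B) (C : Set T.Q) :
    T.Compatible C ↔
    ∃ (d : T.Q → T.Q) (u u' : List A),
      (∀ q ∈ C, (∃ α, T.FinRun q u α (d q)) ∧ (∃ α', T.FinRun (d q) u' α' (d q))) ∧
      (∃ q ∈ C, d q ∈ T.F) ∧
      u' ≠ [] ∧
      u.length ≤ Fintype.card T.Q ^ Fintype.card T.Q ∧
      u'.length ≤ Fintype.card T.Q ^ Fintype.card T.Q :=
  compatible_characterization_general T C
end
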